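/- arXiv:1512.03034 — 6 statements merged into one kernel-verified Lean document; each statement's English description precedes it below -/
import Mathlib

section
/- Let P be an I×J matrix with positive entries such that each column sums to 1. Then for any vectors x, z ∈ ℝ^J with positive entries, KL(x,z) ≥ KL(Px, Pz). -/
/-- Scalar Kullback–Leibler distance. -/
noncomputable def KL (s t : ℝ) : ℝ := s * Real.log (s / t) + t - s

/-!
`KL s t = t * klFun (s / t)` is the perspective of the convex function `klFun`, hence jointly
convex and positively homogeneous, hence subadditive. Splitting `(P x)ᵢ = ∑ⱼ Pᵢⱼ xⱼ` and using
subadditivity for each `i` gives `∑ᵢ KL ((P x)ᵢ, (P z)ᵢ) ≤ ∑ᵢ ∑ⱼ Pᵢⱼ KL (xⱼ, zⱼ)`, and the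
column sums of `P` collapse the right-hand side to `∑ⱼ KL (xⱼ, zⱼ)`.
-/

open Finset InformationTheory

lemma KL_eq_mul_klFun (s : ℝ) {t : ℝ} (ht : t ≠ 0) : KL s t = t * klFun (s / t) := by
  rw [KL, klFun]
  field_simp

lemma KL_mul_mul (c s t : ℝ) : KL (c * s) (c * t) = c * KL s t := by
  rcases eq_or_ne c 0 with rfl | hc
  · simp [KL]
  · rw [KL, KL, mul_div_mul_left _ _ hc]
    ring

lemma KL_sum_le_sum_KL {ι : Type*} (s : Finset ι) (a b : ι → ℝ)
    (ha : ∀ j ∈ s, 0 ≤ a j) (hb : ∀ j ∈ s, 0 < b j) :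
    KL (∑ j ∈ s, a j) (∑ j ∈ s, b j) ≤ ∑ j ∈ s, KL (a j) (b j) := by
  rcases s.eq_empty_or_nonempty with rfl | hs
  · simp [KL]
  set B := ∑ j ∈ s, b j
  have hB : 0 < B := sum_pos hb hs
  have jensen := convexOn_klFun.map_sum_le (t := s) (w := fun j ↦ b j / B)
    (p := fun j ↦ a j / b j) (fun j hj ↦ (div_pos (hb j hj) hB).le)
    (by rw [← sum_div, div_self hB.ne'])
    (fun j hj ↦ Set.mem_Ici.2 (div_nonneg (ha j hj) (hb j hj).le))
  have hmean : ∑ j ∈ s, (b j / B) • (a j / b j) = (∑ j ∈ s, a j) / B := by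
    rw [sum_div]
    refine sum_congr rfl fun j hj ↦ ?_
    rw [smul_eq_mul]
    field_simp [(hb j hj).ne']
  rw [hmean] at jensen
  calc KL (∑ j ∈ s, a j) B = B * klFun ((∑ j ∈ s, a j) / B) := KL_eq_mul_klFun _ hB.ne'
    _ ≤ B * ∑ j ∈ s, (b j / B) • klFun (a j / b j) := mul_le_mul_of_nonneg_left jensen hB.le
    _ = ∑ j ∈ s, KL (a j) (b j) := by
      rw [mul_sum]
      refine sum_congr rfl fun j hj ↦ ?_
      rw [KL_eq_mul_klFun _ (hb j hj).ne', smul_eq_mul]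
      field_simp

theorem stmt_3 {I J : ℕ} (P : Matrix (Fin I) (Fin J) ℝ)
    (hP : ∀ i j, 0 < P i j) (hcol : ∀ j, ∑ i, P i j = 1)
    (x z : Fin J → ℝ) (hx : ∀ j, 0 < x j) (hz : ∀ j, 0 < z j) :
    ∑ i, KL (P.mulVec x i) (P.mulVec z i) ≤ ∑ j, KL (x j) (z j) := by
  calc ∑ i, KL (P.mulVec x i) (P.mulVec z i)
      ≤ ∑ i, ∑ j, KL (P i j * x j) (P i j * z j) := by
        exact sum_le_sum fun i _ ↦
          KL_sum_le_sum_KL univ (fun j ↦ P i j * x j) (fun j ↦ P i j * z j)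
            (fun j _ ↦ (mul_pos (hP i j) (hx j)).le) (fun j _ ↦ mul_pos (hP i j) (hz j))
    _ = ∑ j, KL (x j) (z j) := by
        simp only [KL_mul_mul]
        rw [sum_comm]
        simp only [← sum_mul, hcol, one_mul]
end

section
/- Suppose an iterative algorithm for minimizing f : X → ℝ generates a sequence {x^k} with f(x^k) decreasing to β* and there exist nonnegative functions h_k : X → ℝ such that for all x ∈ X and all k, h_k(x) + f(x) ≥ h_{k+1}(x) + f(x^k). Then β* = inf_{x∈X} f(x). -/
/-! If some `f z` lay below `β*`, then eventually `f (x k) ≥ f z + δ` for a fixed `δ > 0`, and the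
SUMMA2 inequality makes `h k z` drop by at least `δ` at every step from then on, which is impossible
for a nonnegative sequence. -/

open Filter

lemma le_sub_mul_of_forall_succ_add_le {a : ℕ → ℝ} {δ : ℝ} {N : ℕ}
    (hdec : ∀ k ≥ N, a (k + 1) + δ ≤ a k) (m : ℕ) : a (N + m) ≤ a N - m * δ := by
  induction m with
  | zero => simp
  | succ m ih =>
    have := hdec (N + m) (Nat.le_add_right N m)
    rw [← add_assoc]
    push_cast
    linarith

lemma not_eventually_succ_add_le_of_bddBelow {a : ℕ → ℝ} {δ : ℝ} (hbdd : BddBelow (Set.range a))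
    (hδ : 0 < δ) : ¬ ∀ᶠ k in atTop, a (k + 1) + δ ≤ a k := by
  rintro hdec
  obtain ⟨N, hN⟩ := eventually_atTop.mp hdec
  obtain ⟨b, hb⟩ := hbdd
  obtain ⟨m, hm⟩ := exists_nat_gt ((a N - b) / δ)
  have hbelow : a (N + m) < b := by
    have := le_sub_mul_of_forall_succ_add_le hN m
    rw [div_lt_iff₀ hδ] at hm
    linarith
  exact hbelow.not_ge (hb ⟨N + m, rfl⟩)

theorem stmt_4_general {X : Type*} (f : X → ℝ) (x : ℕ → X)
    (h : ℕ → X → ℝ) (βstar : ℝ)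
    (hlim : Filter.Tendsto (fun k => f (x k)) Filter.atTop (nhds βstar))
    (hnonneg : ∀ k z, 0 ≤ h k z)
    (hsumma2 : ∀ k z, h (k + 1) z + f (x k) ≤ h k z + f z) :
    IsGLB (Set.range f) βstar := by
  refine ⟨?_, fun b hb => ge_of_tendsto' hlim fun k => hb ⟨x k, rfl⟩⟩
  rintro _ ⟨z, rfl⟩
  by_contra! hlt
  obtain ⟨c, hzc, hcβ⟩ := exists_between hlt
  have hdec : ∀ᶠ k in atTop, h (k + 1) z + (c - f z) ≤ h k z := by
    filter_upwards [hlim.eventually_const_lt hcβ] with k hk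
    linarith [hsumma2 k z]
  have hbdd : BddBelow (Set.range fun k => h k z) := ⟨0, by rintro _ ⟨k, rfl⟩; exact hnonneg k z⟩
  exact not_eventually_succ_add_le_of_bddBelow hbdd (sub_pos.mpr hzc) hdec

theorem stmt_4 {X : Type*} [Nonempty X] (f : X → ℝ) (x : ℕ → X)
    (h : ℕ → X → ℝ) (βstar : ℝ)
    (hmono : ∀ k, f (x (k + 1)) ≤ f (x k))
    (hlim : Filter.Tendsto (fun k => f (x k)) Filter.atTop (nhds βstar))
    (hnonneg : ∀ k z, 0 ≤ h k z)
    (hsumma2 : ∀ k z, h (k + 1) z + f (x k) ≤ h k z + f z) :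
    IsGLB (Set.range f) βstar :=
  stmt_4_general f x h βstar hlim hnonneg hsumma2
end

section
/- Let A be a real I×J matrix with c_j = ∑_i A_{i,j}² > 0, b ∈ ℝ^I, r(x)_{i,j} = A_{i,j}x_j + (1/J)(b_i - (Ax)_i). Then for all x, z ∈ ℝ^J: E(r(x), r(z)) = ∑_j c_j(x_j - z_j)² - (1/J)∑_i ((Ax)_i - (Az)_i)², where E(u,v) = ∑_{i,j}(u_{i,j} - v_{i,j})². -/
/-! Row `i` of `r x - r z` is the vector `v j = A i j * (x j - z j)` minus its mean `(A x - A z)_i / J`,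
so its squared norm is `∑ v j ^ 2 - (∑ v j) ^ 2 / J`; summing over `i` and exchanging the sums
produces the column weights `c j`. -/

open Finset

theorem sum_sub_mean_sq {ι K : Type*} [Fintype ι] [Field K] (v : ι → K) :
    ∑ j, (v j - (Fintype.card ι : K)⁻¹ * ∑ k, v k) ^ 2 =
      ∑ j, v j ^ 2 - (Fintype.card ι : K)⁻¹ * (∑ j, v j) ^ 2 := by
  set n : K := (Fintype.card ι : K)
  set m : K := ∑ k, v k
  -- `n * n⁻¹ * n⁻¹ = n⁻¹` holds also when `ι` is empty and `n⁻¹ = 0`.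
  have hn : n * n⁻¹ * n⁻¹ = n⁻¹ := by simpa using inv_mul_mul_self n⁻¹
  calc ∑ j, (v j - n⁻¹ * m) ^ 2
      = ∑ j, (v j ^ 2 - 2 * n⁻¹ * m * v j + (n⁻¹ * m) ^ 2) := by
        refine sum_congr rfl fun j _ => ?_
        ring
    _ = ∑ j, v j ^ 2 - 2 * n⁻¹ * m * m + n * (n⁻¹ * m) ^ 2 := by
        rw [sum_add_distrib, sum_sub_distrib, ← mul_sum, sum_const, card_univ, nsmul_eq_mul]
    _ = ∑ j, v j ^ 2 - n⁻¹ * m ^ 2 := by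
        linear_combination m ^ 2 * hn

theorem stmt_13_general {I J : ℕ} (A : Matrix (Fin I) (Fin J) ℝ)
    (b : Fin I → ℝ)
    (c : Fin J → ℝ) (hc : ∀ j, c j = ∑ i, A i j ^ 2)
    (r : (Fin J → ℝ) → Fin I → Fin J → ℝ)
    (hr : ∀ x i j, r x i j = A i j * x j + (1 / (J : ℝ)) * (b i - A.mulVec x i))
    (x z : Fin J → ℝ) :
    ∑ i, ∑ j, (r x i j - r z i j) ^ 2 =
      (∑ j, c j * (x j - z j) ^ 2) -
        (1 / (J : ℝ)) * ∑ i, (A.mulVec x i - A.mulVec z i) ^ 2 := by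
  have hAx : ∀ i, A.mulVec x i - A.mulVec z i = ∑ j, A i j * (x j - z j) := fun i => by
    simp only [Matrix.mulVec, dotProduct, mul_sub, sum_sub_distrib]
  have hrow : ∀ i, ∑ j, (r x i j - r z i j) ^ 2 =
      ∑ j, A i j ^ 2 * (x j - z j) ^ 2 - (1 / (J : ℝ)) * (A.mulVec x i - A.mulVec z i) ^ 2 := by
    intro i
    have h := sum_sub_mean_sq fun j => A i j * (x j - z j)
    simp only [Fintype.card_fin, ← hAx] at h
    simp only [hr, one_div, mul_pow] at h ⊢
    rw [← h]
    refine sum_congr rfl fun j _ => ?_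
    ring
  rw [sum_congr rfl fun i _ => hrow i, sum_sub_distrib, ← mul_sum, sum_comm]
  simp only [hc, sum_mul]

theorem stmt_13 {I J : ℕ} (hJ : 0 < J) (A : Matrix (Fin I) (Fin J) ℝ)
    (b : Fin I → ℝ)
    (c : Fin J → ℝ) (hc : ∀ j, c j = ∑ i, A i j ^ 2) (hcpos : ∀ j, 0 < c j)
    (r : (Fin J → ℝ) → Fin I → Fin J → ℝ)
    (hr : ∀ x i j, r x i j = A i j * x j + (1 / (J : ℝ)) * (b i - A.mulVec x i))
    (x z : Fin J → ℝ) :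
    ∑ i, ∑ j, (r x i j - r z i j) ^ 2 =
      (∑ j, c j * (x j - z j) ^ 2) -
        (1 / (J : ℝ)) * ∑ i, (A.mulVec x i - A.mulVec z i) ^ 2 :=
  stmt_13_general A b c hc r hr x z
end

section
/- Let P be an I×J matrix with positive entries and column sums equal to 1, y ∈ ℝ^I with positive entries, and x ∈ ℝ^J with positive entries. Define the SMART operator (Sx)_j = x_j·exp(∑_i P_{i,j} log(y_i/(Px)_i)). Then ∑_j (Sx)_j ≤ ∑_i y_i. -/
/-!
For each column `j`, `(Px)ᵢ ≥ P i j xⱼ > 0` and the weights `P i j` form a probability vector,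
so weighted AM-GM (Jensen for `exp`) bounds the geometric mean `exp (∑ᵢ P i j log (yᵢ / (Px)ᵢ))`
by the arithmetic mean `∑ᵢ P i j yᵢ / (Px)ᵢ`. Multiplying by `xⱼ` and summing over `j`
reassembles `(Px)ᵢ` in each term, which cancels the denominators and leaves `∑ᵢ yᵢ`.
-/

open Finset Matrix

theorem Real.exp_sum_mul_log_le_sum_mul {ι : Type*} (s : Finset ι) (w z : ι → ℝ)
    (hw : ∀ i ∈ s, 0 ≤ w i) (hw' : ∑ i ∈ s, w i = 1) (hz : ∀ i ∈ s, 0 < z i) :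
    Real.exp (∑ i ∈ s, w i * Real.log (z i)) ≤ ∑ i ∈ s, w i * z i := by
  have jensen := convexOn_exp.map_sum_le hw hw' fun i _ => Set.mem_univ (Real.log (z i))
  simp only [smul_eq_mul] at jensen
  calc Real.exp (∑ i ∈ s, w i * Real.log (z i))
      ≤ ∑ i ∈ s, w i * Real.exp (Real.log (z i)) := jensen
    _ = ∑ i ∈ s, w i * z i := sum_congr rfl fun i hi => by rw [Real.exp_log (hz i hi)]

theorem Matrix.mul_le_mulVec_apply {ι κ R : Type*} [Fintype κ] [CommSemiring R] [PartialOrder R]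
    [IsOrderedRing R] {P : Matrix ι κ R} {x : κ → R} (hP : ∀ i j, 0 ≤ P i j) (hx : ∀ j, 0 ≤ x j)
    (i : ι) (j : κ) : P i j * x j ≤ (P *ᵥ x) i :=
  single_le_sum (f := fun j => P i j * x j) (fun j _ => mul_nonneg (hP i j) (hx j)) (mem_univ j)

theorem Matrix.sum_mul_sum_mul_eq_sum_mul_mulVec {ι κ R : Type*} [Fintype ι] [Fintype κ]
    [CommSemiring R] (P : Matrix ι κ R) (x : κ → R) (z : ι → R) :
    ∑ j, x j * ∑ i, P i j * z i = ∑ i, z i * (P *ᵥ x) i := by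
  simp only [mulVec, dotProduct, mul_sum]
  rw [sum_comm]
  exact sum_congr rfl fun _ _ => sum_congr rfl fun _ _ => by ring

theorem stmt_14 {I J : ℕ} (P : Matrix (Fin I) (Fin J) ℝ)
    (hP : ∀ i j, 0 < P i j) (hcol : ∀ j, ∑ i, P i j = 1)
    (y : Fin I → ℝ) (hy : ∀ i, 0 < y i)
    (x : Fin J → ℝ) (hx : ∀ j, 0 < x j) :
    ∑ j, x j * Real.exp (∑ i, P i j * Real.log (y i / P.mulVec x i)) ≤
      ∑ i, y i := by
  have hPx_ge : ∀ i j, P i j * x j ≤ (P *ᵥ x) i :=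
    mul_le_mulVec_apply (fun i j => (hP i j).le) (fun j => (hx j).le)
  have amgm : ∀ j, Real.exp (∑ i, P i j * Real.log (y i / (P *ᵥ x) i)) ≤
      ∑ i, P i j * (y i / (P *ᵥ x) i) := fun j =>
    Real.exp_sum_mul_log_le_sum_mul _ _ _ (fun i _ => (hP i j).le) (hcol j) fun i _ =>
      div_pos (hy i) ((mul_pos (hP i j) (hx j)).trans_le (hPx_ge i j))
  calc ∑ j, x j * Real.exp (∑ i, P i j * Real.log (y i / (P *ᵥ x) i))
      ≤ ∑ j, x j * ∑ i, P i j * (y i / (P *ᵥ x) i) :=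
        sum_le_sum fun j _ => mul_le_mul_of_nonneg_left (amgm j) (hx j).le
    _ = ∑ i, y i / (P *ᵥ x) i * (P *ᵥ x) i := sum_mul_sum_mul_eq_sum_mul_mulVec P x _
    _ ≤ ∑ i, y i := sum_le_sum fun i _ => by
        rcases eq_or_ne ((P *ᵥ x) i) 0 with h | h
        · simpa [h] using (hy i).le
        · rw [div_mul_cancel₀ _ h]
end

section
/- Let P be an I×J matrix with nonnegative entries whose columns each sum to 1. Then for all nonnegative vectors x, z ∈ ℝ^J: ∑_i √((Px)_i(Pz)_i) ≥ ∑_j √(x_j z_j). -/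
/-! Since each column of `P` sums to `1`, `√(x j * z j) = ∑ i, √(P i j * x j) * √(P i j * z j)`.
Exchanging the two sums and applying Cauchy–Schwarz to each row of `P` bounds the `i`-th inner
sum by `√((P x) i * (P z) i)`. -/

open Finset

lemma Real.sqrt_mul_mul_sqrt_mul {c a : ℝ} (hc : 0 ≤ c) (ha : 0 ≤ a) (b : ℝ) :
    √(c * a) * √(c * b) = c * √(a * b) := by
  rw [Real.sqrt_mul hc, Real.sqrt_mul hc, Real.sqrt_mul ha]
  linear_combination √a * √b * Real.mul_self_sqrt hc

namespace Matrix

variable {ι κ : Type*} [Fintype κ] (P : Matrix ι κ ℝ) {x z : κ → ℝ}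

lemma sum_sqrt_mul_eq_sum_sum_sqrt_mul [Fintype ι] (hP : ∀ i j, 0 ≤ P i j)
    (hcol : ∀ j, ∑ i, P i j = 1) (hx : ∀ j, 0 ≤ x j) :
    ∑ j, √(x j * z j) = ∑ i, ∑ j, √(P i j * x j) * √(P i j * z j) := by
  rw [sum_comm]
  refine sum_congr rfl fun j _ => ?_
  simp only [Real.sqrt_mul_mul_sqrt_mul (hP _ j) (hx j), ← sum_mul, hcol j, one_mul]

lemma sum_sqrt_mul_le_sqrt_mulVec_mul_mulVec (hP : ∀ i j, 0 ≤ P i j) (hx : ∀ j, 0 ≤ x j)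
    (hz : ∀ j, 0 ≤ z j) (i : ι) :
    ∑ j, √(P i j * x j) * √(P i j * z j) ≤ √(P.mulVec x i * P.mulVec z i) := by
  have hPx : 0 ≤ P.mulVec x i := sum_nonneg fun j _ => mul_nonneg (hP i j) (hx j)
  rw [Real.sqrt_mul hPx]
  exact Real.sum_sqrt_mul_sqrt_le univ (fun j => mul_nonneg (hP i j) (hx j))
    (fun j => mul_nonneg (hP i j) (hz j))

theorem sum_sqrt_mul_le_sum_sqrt_mulVec_mul_mulVec [Fintype ι] (hP : ∀ i j, 0 ≤ P i j)
    (hcol : ∀ j, ∑ i, P i j = 1) (hx : ∀ j, 0 ≤ x j) (hz : ∀ j, 0 ≤ z j) :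
    ∑ j, √(x j * z j) ≤ ∑ i, √(P.mulVec x i * P.mulVec z i) := by
  rw [P.sum_sqrt_mul_eq_sum_sum_sqrt_mul hP hcol hx]
  exact sum_le_sum fun i _ => P.sum_sqrt_mul_le_sqrt_mulVec_mul_mulVec hP hx hz i

end Matrix

theorem stmt_17 {I J : ℕ} (P : Matrix (Fin I) (Fin J) ℝ)
    (hP : ∀ i j, 0 ≤ P i j) (hcol : ∀ j, ∑ i, P i j = 1)
    (x z : Fin J → ℝ) (hx : ∀ j, 0 ≤ x j) (hz : ∀ j, 0 ≤ z j) :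
    ∑ j, Real.sqrt (x j * z j) ≤
      ∑ i, Real.sqrt (P.mulVec x i * P.mulVec z i) :=
  P.sum_sqrt_mul_le_sum_sqrt_mulVec_mul_mulVec hP hcol hx hz
end

section
/- Let P be an I×J matrix with nonnegative entries whose columns each sum to 1. Then for all nonnegative vectors x, z ∈ ℝ^J: H(x,z) ≥ H(Px, Pz), where H(u,v) = ∑_n (√u_n - √v_n)² is the Hellinger distance. -/
/-!
Write `H(u, v) = ∑ u + ∑ v - 2 B(u, v)` with the Bhattacharyya coefficient `B(u, v) = ∑ √(u v)`.
A column-stochastic `P` preserves total mass, so it suffices to show `B(x, z) ≤ B(Px, Pz)`.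
Row by row this is Cauchy–Schwarz:
`∑_j P_ij √(x_j z_j) = ∑_j √(P_ij x_j) √(P_ij z_j) ≤ √((Px)_i) √((Pz)_i)`,
and summing over `i` uses `∑_i P_ij = 1` once more.
-/

open Finset Matrix

variable {ι κ : Type*} [Fintype κ]

noncomputable def hellingerSq (u v : κ → ℝ) : ℝ := ∑ j, (√(u j) - √(v j)) ^ 2

noncomputable def bhattacharyya (u v : κ → ℝ) : ℝ := ∑ j, √(u j * v j)

lemma Real.sqrt_sub_sqrt_sq {a b : ℝ} (ha : 0 ≤ a) (hb : 0 ≤ b) :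
    (√a - √b) ^ 2 = a + b - 2 * √(a * b) := by
  rw [sub_sq, Real.sq_sqrt ha, Real.sq_sqrt hb, Real.sqrt_mul ha]
  ring

lemma hellingerSq_eq {u v : κ → ℝ} (hu : ∀ j, 0 ≤ u j) (hv : ∀ j, 0 ≤ v j) :
    hellingerSq u v = ∑ j, u j + ∑ j, v j - 2 * bhattacharyya u v := by
  simp only [hellingerSq, bhattacharyya, Real.sqrt_sub_sqrt_sq (hu _) (hv _),
    sum_sub_distrib, sum_add_distrib, mul_sum]

namespace Matrix

variable {P : Matrix ι κ ℝ}

lemma mulVec_nonneg (hP : ∀ i j, 0 ≤ P i j) {x : κ → ℝ} (hx : ∀ j, 0 ≤ x j) (i : ι) :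
    0 ≤ (P *ᵥ x) i :=
  sum_nonneg fun j _ => mul_nonneg (hP i j) (hx j)

lemma sum_mul_sqrt_mul_le_sqrt_mulVec_mul (hP : ∀ i j, 0 ≤ P i j) {x z : κ → ℝ}
    (hx : ∀ j, 0 ≤ x j) (hz : ∀ j, 0 ≤ z j) (i : ι) :
    ∑ j, P i j * √(x j * z j) ≤ √((P *ᵥ x) i * (P *ᵥ z) i) := by
  have hsplit : ∀ j, P i j * √(x j * z j) = √(P i j * x j) * √(P i j * z j) := fun j => by
    rw [← Real.sqrt_mul (mul_nonneg (hP i j) (hx j)), mul_mul_mul_comm, ← pow_two,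
      Real.sqrt_mul (sq_nonneg _), Real.sqrt_sq (hP i j)]
  rw [Real.sqrt_mul (mulVec_nonneg hP hx i)]
  simp only [hsplit]
  exact Real.sum_sqrt_mul_sqrt_le _ (fun j => mul_nonneg (hP i j) (hx j))
    (fun j => mul_nonneg (hP i j) (hz j))

variable [Fintype ι]

lemma sum_mulVec_of_sum_col_eq_one (hcol : ∀ j, ∑ i, P i j = 1) (x : κ → ℝ) :
    ∑ i, (P *ᵥ x) i = ∑ j, x j := by
  simp only [mulVec, dotProduct]
  rw [sum_comm]
  simp only [← sum_mul, hcol, one_mul]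

lemma bhattacharyya_le_bhattacharyya_mulVec (hP : ∀ i j, 0 ≤ P i j)
    (hcol : ∀ j, ∑ i, P i j = 1) {x z : κ → ℝ} (hx : ∀ j, 0 ≤ x j) (hz : ∀ j, 0 ≤ z j) :
    bhattacharyya x z ≤ bhattacharyya (P *ᵥ x) (P *ᵥ z) :=
  calc bhattacharyya x z = ∑ i, ∑ j, P i j * √(x j * z j) := by
        simp only [bhattacharyya, sum_comm (γ := ι), ← sum_mul, hcol, one_mul]
    _ ≤ bhattacharyya (P *ᵥ x) (P *ᵥ z) :=
        sum_le_sum fun i _ => sum_mul_sqrt_mul_le_sqrt_mulVec_mul hP hx hz i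

lemma hellingerSq_mulVec_le (hP : ∀ i j, 0 ≤ P i j) (hcol : ∀ j, ∑ i, P i j = 1)
    {x z : κ → ℝ} (hx : ∀ j, 0 ≤ x j) (hz : ∀ j, 0 ≤ z j) :
    hellingerSq (P *ᵥ x) (P *ᵥ z) ≤ hellingerSq x z := by
  rw [hellingerSq_eq (mulVec_nonneg hP hx) (mulVec_nonneg hP hz), hellingerSq_eq hx hz,
    sum_mulVec_of_sum_col_eq_one hcol, sum_mulVec_of_sum_col_eq_one hcol]
  linarith [bhattacharyya_le_bhattacharyya_mulVec hP hcol hx hz]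

end Matrix

theorem stmt_18 {I J : ℕ} (P : Matrix (Fin I) (Fin J) ℝ)
    (hP : ∀ i j, 0 ≤ P i j) (hcol : ∀ j, ∑ i, P i j = 1)
    (x z : Fin J → ℝ) (hx : ∀ j, 0 ≤ x j) (hz : ∀ j, 0 ≤ z j) :
    ∑ i, (Real.sqrt (P.mulVec x i) - Real.sqrt (P.mulVec z i)) ^ 2 ≤
      ∑ j, (Real.sqrt (x j) - Real.sqrt (z j)) ^ 2 :=
  hellingerSq_mulVec_le hP hcol hx hz
end
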